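/- Let λ_n = n(n−1)(n−2) + 1 for n ∈ ℕ (the eigenvalues of Ĝ = A*³A³ + I) and set r_k = (λ_k + λ_{k+1})/2. Then for every real β ≥ 3, every integer k ≥ 2, every z ∈ ℂ with |z| = r_k, and every n ∈ ℕ, one has |λ_n − z| ≥ (1/2)·r_k^{2/β}. Equivalently, on the circles |z| = r_k the resolvent of Ĝ satisfies ‖(Ĝ − zI)^{−1}‖ ≤ 2/|z|^{2/β}. -/

import Mathlib

/-!
Consecutive eigenvalues differ by `λ_{k+1} − λ_k = 3k(k−1)`, and `r_k` is their midpoint, so by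
monotonicity every `λ_n` lies at distance at least `3k(k−1)/2` from `r_k = |z|`, hence from `z`.
Since `r_k ≍ k³` while the gap is `≍ 3k²`, one has `r_k² ≤ (3k(k−1))³`, i.e.
`r_k^{2/β} ≤ r_k^{2/3} ≤ 3k(k−1)`.
-/

/-- The eigenvalues `λₙ = n(n−1)(n−2) + 1` of `Ĝ = A*³A³ + I`. -/
def lamGhat (n : ℕ) : ℕ := n * (n - 1) * (n - 2) + 1

/-- The radius `r_k = (λ_k + λ_{k+1})/2`. -/
noncomputable def rCirc (k : ℕ) : ℝ := ((lamGhat k : ℝ) + (lamGhat (k + 1) : ℝ)) / 2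

lemma Monotone.half_sub_le_abs_sub_midpoint {f : ℕ → ℝ} (hf : Monotone f) (k n : ℕ) :
    (f (k + 1) - f k) / 2 ≤ |f n - (f k + f (k + 1)) / 2| := by
  have hk := hf k.le_succ
  rcases le_or_gt n k with hn | hn
  · have := hf hn
    rw [abs_sub_comm, abs_of_nonneg (by linarith)]
    linarith
  · have := hf (Nat.succ_le_of_lt hn)
    rw [abs_of_nonneg (by linarith)]
    linarith

lemma Real.rpow_two_div_le_of_sq_le_pow_three {r g β : ℝ} (hr : 1 ≤ r) (hβ : 3 ≤ β)
    (h : r ^ 2 ≤ g ^ 3) : r ^ (2 / β) ≤ g := by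
  have hg : 0 ≤ g := (Odd.pow_nonneg_iff (by decide)).mp ((sq_nonneg r).trans h)
  calc r ^ (2 / β) ≤ r ^ ((2 : ℝ) / 3) :=
        rpow_le_rpow_of_exponent_le hr (div_le_div_of_nonneg_left (by norm_num) (by norm_num) hβ)
    _ = (r ^ 2) ^ ((3 : ℕ) : ℝ)⁻¹ := by
        rw [← rpow_natCast, ← rpow_mul (by linarith)]
        norm_num
    _ ≤ (g ^ 3) ^ ((3 : ℕ) : ℝ)⁻¹ := by gcongr
    _ = g := pow_rpow_inv_natCast hg (by norm_num)

lemma lamGhat_monotone : Monotone lamGhat := fun _ _ h => by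
  unfold lamGhat
  gcongr

lemma lamGhat_succ (k : ℕ) : (lamGhat (k + 1) : ℝ) = lamGhat k + 3 * k * (k - 1) := by
  rcases k with _ | _ | m
  · simp [lamGhat]
  · simp [lamGhat]
  · simp only [lamGhat, Nat.add_sub_cancel, show m + 1 + 1 + 1 - 2 = m + 1 by omega,
      show m + 1 + 1 - 2 = m by omega, show m + 1 + 1 - 1 = m + 1 by omega]
    push_cast
    ring

lemma one_le_rCirc (k : ℕ) : 1 ≤ rCirc k := by
  have h₁ : (1 : ℝ) ≤ lamGhat k := by exact_mod_cast Nat.le_add_left 1 _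
  have h₂ : (1 : ℝ) ≤ lamGhat (k + 1) := by exact_mod_cast Nat.le_add_left 1 _
  rw [rCirc]
  linarith

lemma rCirc_sq_le (k : ℕ) (hk : 2 ≤ k) : rCirc k ^ 2 ≤ (3 * k * (k - 1) : ℝ) ^ 3 := by
  obtain ⟨m, rfl⟩ := Nat.exists_eq_add_of_le' hk
  simp only [rCirc, lamGhat, show m + 2 - 1 = m + 1 by omega, show m + 2 - 2 = m by omega,
    show m + 2 + 1 - 1 = m + 2 by omega, show m + 2 + 1 - 2 = m + 1 by omega]
  push_cast
  have hm : (0 : ℝ) ≤ m := m.cast_nonneg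
  -- `r_k ≤ k²(k−1)`, and `(k²(k−1))² ≤ (3k(k−1))³` reduces to `k ≤ 27(k−1)`.
  calc _ ≤ (((m : ℝ) + 2) ^ 2 * (m + 1)) ^ 2 := by gcongr; nlinarith
    _ ≤ _ := by
      have : ((m : ℝ) + 2) ^ 3 * (m + 1) ^ 2 * (26 * m + 25) ≥ 0 := by positivity
      nlinarith

/-- On the circles `|z| = r_k` (`k ≥ 2`), for every `β ≥ 3` the distance from `z`
to each eigenvalue `λₙ` of `Ĝ` is at least `(1/2)·r_k^{2/β}`; equivalently the
resolvent of `Ĝ` satisfies `‖(Ĝ − z)⁻¹‖ ≤ 2/|z|^{2/β}` there. -/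
theorem gHat_resolvent_circle_estimate (β : ℝ) (hβ : 3 ≤ β)
    (k : ℕ) (hk : 2 ≤ k) (z : ℂ) (hz : ‖z‖ = rCirc k) (n : ℕ) :
    ‖((lamGhat n : ℕ) : ℂ) - z‖ ≥ (1 / 2) * (rCirc k) ^ ((2 : ℝ) / β) := by
  have hmid : ((lamGhat (k + 1) : ℝ) - lamGhat k) / 2 ≤ |(lamGhat n : ℝ) - rCirc k| :=
    (Nat.mono_cast.comp lamGhat_monotone).half_sub_le_abs_sub_midpoint k n
  rw [lamGhat_succ, add_sub_cancel_left] at hmid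
  have hpow := Real.rpow_two_div_le_of_sq_le_pow_three (one_le_rCirc k) hβ (rCirc_sq_le k hk)
  calc (1 / 2) * rCirc k ^ ((2 : ℝ) / β) ≤ 3 * k * (k - 1) / 2 := by linarith
    _ ≤ |(lamGhat n : ℝ) - rCirc k| := hmid
    _ = |‖((lamGhat n : ℕ) : ℂ)‖ - ‖z‖| := by rw [Complex.norm_natCast, hz]
    _ ≤ ‖((lamGhat n : ℕ) : ℂ) - z‖ := abs_norm_sub_norm_le _ _
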